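/- Every Martin-Löf random sequence with respect to the Bernoulli measure μ_p with computable parameter p ∈ (0,1) satisfies the law of large numbers: lim_{n→∞} (1/n) Σ_{i=0}^{n−1} x(i) = p. -/

import Mathlib

open MeasureTheory Filter
open scoped ENNReal

/-- The cylinder set of a finite binary string. -/
def cylSet (σ : List Bool) : Set (ℕ → Bool) := {z | ∀ i < σ.length, z i = σ.getD i false}

/-- Martin-Löf randomness of `z` with respect to a measure `μ` on Cantor space:
`z` avoids every uniformly c.e. sequence of open sets `U_n` with `μ(U_n) ≤ 2^{-n}`. -/
def MLRandom (μ : Measure (ℕ → Bool)) (z : ℕ → Bool) : Prop :=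
  ¬ ∃ S : ℕ → Set (List Bool),
      REPred (fun q : ℕ × List Bool => q.2 ∈ S q.1) ∧
      (∀ n, μ (⋃ σ ∈ S n, cylSet σ) ≤ (1 / 2 : ℝ≥0∞) ^ n) ∧
      (∀ n, z ∈ ⋃ σ ∈ S n, cylSet σ)

/-- A real number is computable if it can be approximated to precision `2^{-n}` by a
computable sequence of rationals. -/
def ComputableReal (r : ℝ) : Prop :=
  ∃ f : ℕ → ℚ, Computable f ∧ ∀ n, |(f n : ℝ) - r| ≤ (1 / 2 : ℝ) ^ n

/-!
If the frequency of ones in `x` is at least a rational `q > p` infinitely often, then `x` has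
infinitely many prefixes in the primitive recursive set of strings with frequency at least `q`.
By Chernoff's bound the strings of length `L` in that set carry `μ_p`-measure at most `r ^ L` for
some `r < 1`, so the strings of length at least `k (n + B)` in it form, for suitable `k` and `B`,
a Martin-Löf test whose `n`-th level has measure at most `2⁻ⁿ` and which captures `x`.
Frequencies at most a rational `q < p` are handled in the same way.
-/

def prefixOf (z : ℕ → Bool) (L : ℕ) : List Bool := List.ofFn fun i : Fin L => z i

@[simp] lemma length_prefixOf (z : ℕ → Bool) (L : ℕ) : (prefixOf z L).length = L :=
  List.length_ofFn

lemma mem_cylSet_iff {z : ℕ → Bool} {σ : List Bool} : z ∈ cylSet σ ↔ prefixOf z σ.length = σ := by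
  constructor
  · intro hz
    refine List.ext_getElem (length_prefixOf z _) fun i _ hi => ?_
    simp [prefixOf, hz i hi, hi]
  · intro hz i hi
    calc z i = (prefixOf z σ.length).getD i false := by simp [prefixOf, hi]
      _ = σ.getD i false := by rw [hz]

lemma mem_cylSet_prefixOf (z : ℕ → Bool) (L : ℕ) : z ∈ cylSet (prefixOf z L) := by
  rw [mem_cylSet_iff, length_prefixOf]

lemma count_true_ofFn {L : ℕ} (g : Fin L → Bool) :
    (List.ofFn g).count true = ∑ i, if g i then 1 else 0 := by
  induction L with
  | zero => simp
  | succ L ih =>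
    rw [List.ofFn_succ, List.count_cons, ih, Fin.sum_univ_succ]
    cases g 0 <;> simp [add_comm]

lemma primrec_count_true : Primrec (List.count true) := by
  refine (Primrec.list_foldr (f := id) (g := fun _ => 0)
    (h := fun _ q => bif q.1 then q.2 + 1 else q.2) Primrec.id (Primrec.const 0)
    (Primrec.cond (Primrec.fst.comp Primrec.snd) (Primrec.succ.comp (Primrec.snd.comp Primrec.snd))
      (Primrec.snd.comp Primrec.snd))).of_eq fun σ => ?_
  induction σ with
  | nil => rfl
  | cons b σ ih => cases b <;> simp_all

def bernoulliWeight (p : ℝ) {L : ℕ} (g : Fin L → Bool) : ℝ := ∏ i, if g i then p else 1 - p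

lemma bernoulliWeight_nonneg {p : ℝ} (hp : p ∈ Set.Icc 0 1) {L : ℕ} (g : Fin L → Bool) :
    0 ≤ bernoulliWeight p g :=
  Finset.prod_nonneg fun i _ => by split <;> linarith [hp.1, hp.2]

lemma sum_bernoulliWeight_mul_exp (p s : ℝ) (L : ℕ) :
    ∑ g : Fin L → Bool, bernoulliWeight p g * Real.exp (s * ∑ i, if g i then 1 else 0) =
      (p * Real.exp s + (1 - p)) ^ L := by
  have hbase : p * Real.exp s + (1 - p) =
      ∑ b : Bool, (if b then p else 1 - p) * Real.exp (s * if b then 1 else 0) := by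
    simp
  rw [hbase, Fintype.sum_pow]
  refine Fintype.sum_congr _ _ fun g => ?_
  rw [Finset.prod_mul_distrib, Finset.mul_sum, Real.exp_sum, bernoulliWeight]

lemma bernoulli_mgf_le {p s : ℝ} (hp : p ∈ Set.Icc 0 1) (hs : |s| ≤ 1) :
    p * Real.exp s + (1 - p) ≤ Real.exp (p * s + s ^ 2) := by
  have hexp : Real.exp s ≤ 1 + s + s ^ 2 := by
    linarith [(abs_le.1 (Real.abs_exp_sub_one_sub_id_le hs)).2]
  calc p * Real.exp s + (1 - p) ≤ p * s + p * s ^ 2 + 1 := by nlinarith [hp.1]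
    _ ≤ p * s + s ^ 2 + 1 := by nlinarith [hp.2, sq_nonneg s]
    _ ≤ Real.exp (p * s + s ^ 2) := Real.add_one_le_exp _

/-- Chernoff's bound: Markov's inequality for `exp (s * #ones)`. -/
lemma sum_bernoulliWeight_le_exp {p s θ : ℝ} (hp : p ∈ Set.Icc 0 1) (hs : |s| ≤ 1) {L : ℕ}
    (T : Finset (Fin L → Bool)) (hT : ∀ g ∈ T, θ * L ≤ s * ∑ i, if g i then 1 else 0) :
    ∑ g ∈ T, bernoulliWeight p g ≤ Real.exp ((p * s + s ^ 2 - θ) * L) := by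
  set ones : (Fin L → Bool) → ℝ := fun g => ∑ i, if g i then 1 else 0
  calc ∑ g ∈ T, bernoulliWeight p g
      ≤ ∑ g ∈ T, bernoulliWeight p g * Real.exp (s * ones g - θ * L) :=
        Finset.sum_le_sum fun g hg => le_mul_of_one_le_right (bernoulliWeight_nonneg hp g)
          (Real.one_le_exp (sub_nonneg.2 (hT g hg)))
    _ ≤ ∑ g, bernoulliWeight p g * Real.exp (s * ones g - θ * L) :=
        Finset.sum_le_univ_sum_of_nonneg fun g =>
          mul_nonneg (bernoulliWeight_nonneg hp g) (Real.exp_nonneg _)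
    _ = (p * Real.exp s + (1 - p)) ^ L * Real.exp (-(θ * L)) := by
        simp_rw [sub_eq_add_neg, Real.exp_add, ← mul_assoc, ← Finset.sum_mul]
        rw [← sub_eq_add_neg, sum_bernoulliWeight_mul_exp]
    _ ≤ Real.exp (p * s + s ^ 2) ^ L * Real.exp (-(θ * L)) := by
        gcongr
        · nlinarith [hp.1, hp.2, Real.exp_nonneg s]
        · exact bernoulli_mgf_le hp hs
    _ = Real.exp ((p * s + s ^ 2 - θ) * L) := by
        rw [← Real.exp_nat_mul, ← Real.exp_add]
        ring_nf

def IsBernoulliMeasure (p : ℝ) (μ : Measure (ℕ → Bool)) : Prop :=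
  ∀ σ : List Bool, μ (cylSet σ) = ∏ i ∈ Finset.range σ.length,
    ENNReal.ofReal (if σ.getD i false then p else 1 - p)

lemma IsBernoulliMeasure.measure_cylSet_ofFn {p : ℝ} {μ : Measure (ℕ → Bool)}
    (hμ : IsBernoulliMeasure p μ) (hp : p ∈ Set.Icc 0 1) {L : ℕ} (g : Fin L → Bool) :
    μ (cylSet (List.ofFn g)) = ENNReal.ofReal (bernoulliWeight p g) := by
  rw [hμ, bernoulliWeight, ENNReal.ofReal_prod_of_nonneg fun i _ => by
    split <;> linarith [hp.1, hp.2], List.length_ofFn, ← Fin.prod_univ_eq_prod_range]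
  simp [List.getD_eq_getElem?_getD]

lemma IsBernoulliMeasure.measure_setOf_prefixOf_le {p : ℝ} {μ : Measure (ℕ → Bool)}
    (hμ : IsBernoulliMeasure p μ) (hp : p ∈ Set.Icc 0 1) (R : List Bool → Bool) (L : ℕ) :
    μ {z | R (prefixOf z L)} ≤
      ENNReal.ofReal (∑ g : Fin L → Bool with R (List.ofFn g), bernoulliWeight p g) := by
  have hcover : {z | R (prefixOf z L)} ⊆
      ⋃ g ∈ ({g : Fin L → Bool | R (List.ofFn g)} : Finset _), cylSet (List.ofFn g) := by
    intro z hz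
    simp only [Set.mem_iUnion]
    exact ⟨fun i => z i, by simpa [prefixOf] using hz, mem_cylSet_prefixOf z L⟩
  calc μ {z | R (prefixOf z L)}
      ≤ ∑ g : Fin L → Bool with R (List.ofFn g), μ (cylSet (List.ofFn g)) :=
        (measure_mono hcover).trans (measure_biUnion_finset_le _ _)
    _ = _ := by
        simp_rw [hμ.measure_cylSet_ofFn hp]
        rw [ENNReal.ofReal_sum_of_nonneg fun g _ => bernoulliWeight_nonneg hp g]

lemma ENNReal.exists_pow_mul_le_half_pow {r : ℝ≥0∞} (hr : r < 1) :
    ∃ k B : ℕ, ∀ n, r ^ (k * (n + B)) * (1 - r)⁻¹ ≤ (1 / 2) ^ n := by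
  obtain ⟨k, hk⟩ := ((ENNReal.tendsto_pow_atTop_nhds_zero_of_lt_one hr).eventually
    (gt_mem_nhds (show (0 : ℝ≥0∞) < 1 / 2 by norm_num))).exists
  obtain ⟨B, hB⟩ := ENNReal.exists_nat_gt (ENNReal.inv_ne_top.2 (tsub_pos_of_lt hr).ne')
  have hB2 : (1 - r)⁻¹ ≤ 2 ^ B := hB.le.trans (by exact_mod_cast Nat.lt_two_pow_self.le)
  refine ⟨k, B, fun n => ?_⟩
  calc r ^ (k * (n + B)) * (1 - r)⁻¹ ≤ (1 / 2) ^ (n + B) * 2 ^ B := by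
        rw [pow_mul]
        gcongr
    _ = (1 / 2) ^ n := by
        rw [pow_add, mul_assoc, ← mul_pow, one_div, ENNReal.inv_mul_cancel (by norm_num)
          (by norm_num), one_pow, mul_one]

theorem not_mlRandom_of_frequently_prefixOf {μ : Measure (ℕ → Bool)} {R : List Bool → Bool}
    (hR : Computable R) {r : ℝ≥0∞} (hr : r < 1) (hμR : ∀ L, μ {z | R (prefixOf z L)} ≤ r ^ L)
    {x : ℕ → Bool} (hx : ∃ᶠ L in atTop, R (prefixOf x L)) : ¬ MLRandom μ x := by
  obtain ⟨k, B, hkB⟩ := ENNReal.exists_pow_mul_le_half_pow hr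
  set N : ℕ → ℕ := fun n => k * (n + B)
  refine not_not.2 ⟨fun n => {σ | N n ≤ σ.length ∧ R σ}, ?_, fun n => ?_, fun n => ?_⟩
  · refine ComputablePred.to_re (ComputablePred.computable_iff.2
      ⟨fun q => decide (N q.1 ≤ q.2.length) && R q.2, ?_, ?_⟩)
    · have hN : Primrec fun q : ℕ × List Bool => N q.1 :=
        Primrec.nat_mul.comp (Primrec.const k)
          (Primrec.nat_add.comp Primrec.fst (Primrec.const B))
      exact (Primrec.dom_bool₂ (· && ·)).to_comp.comp
        (PrimrecRel.comp Primrec.nat_le hN (Primrec.list_length.comp Primrec.snd)).decide.to_comp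
        (hR.comp Computable.snd)
    · ext q
      simp
  · have hcover : ⋃ σ ∈ {σ : List Bool | N n ≤ σ.length ∧ R σ}, cylSet σ ⊆
        ⋃ j, {z | R (prefixOf z (N n + j))} := by
      simp only [Set.subset_def, Set.mem_iUnion, Set.mem_ofPred_eq]
      rintro z ⟨σ, ⟨hlen, hRσ⟩, hz⟩
      refine ⟨σ.length - N n, ?_⟩
      rwa [Nat.add_sub_cancel' hlen, mem_cylSet_iff.1 hz]
    calc μ (⋃ σ ∈ {σ : List Bool | N n ≤ σ.length ∧ R σ}, cylSet σ)
        ≤ ∑' j, r ^ (N n + j) :=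
          (measure_mono hcover).trans ((measure_iUnion_le _).trans (ENNReal.tsum_le_tsum
            fun j => hμR _))
      _ = r ^ N n * (1 - r)⁻¹ := by
          simp_rw [pow_add, ENNReal.tsum_mul_left, ENNReal.tsum_geometric]
      _ ≤ (1 / 2) ^ n := hkB n
  · obtain ⟨L, hL, hRL⟩ := frequently_atTop.1 hx (N n)
    exact Set.mem_biUnion (x := prefixOf x L) ⟨by simpa using hL, hRL⟩ (mem_cylSet_prefixOf x L)

theorem IsBernoulliMeasure.not_mlRandom_of_frequently {p : ℝ} {μ : Measure (ℕ → Bool)}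
    (hμ : IsBernoulliMeasure p μ) (hp : p ∈ Set.Icc 0 1) {R : List Bool → Bool}
    (hR : Computable R) {s θ : ℝ} (hs : |s| ≤ 1) (hθ : p * s + s ^ 2 < θ)
    (hRθ : ∀ σ, R σ → θ * σ.length ≤ s * σ.count true) {x : ℕ → Bool}
    (hx : ∃ᶠ L in atTop, R (prefixOf x L)) : ¬ MLRandom μ x := by
  refine not_mlRandom_of_frequently_prefixOf hR
    (r := ENNReal.ofReal (Real.exp (p * s + s ^ 2 - θ))) ?_ (fun L => ?_) hx
  · rw [ENNReal.ofReal_lt_one, Real.exp_lt_one_iff]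
    linarith
  calc μ {z | R (prefixOf z L)}
      ≤ ENNReal.ofReal (∑ g : Fin L → Bool with R (List.ofFn g), bernoulliWeight p g) :=
        hμ.measure_setOf_prefixOf_le hp R L
    _ ≤ ENNReal.ofReal (Real.exp ((p * s + s ^ 2 - θ) * L)) := by
        refine ENNReal.ofReal_le_ofReal (sum_bernoulliWeight_le_exp hp hs _ fun g hg => ?_)
        simpa [count_true_ofFn] using hRθ _ (Finset.mem_filter.1 hg).2
    _ = _ := by rw [← ENNReal.ofReal_pow (Real.exp_nonneg _), ← Real.exp_nat_mul, mul_comm]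

lemma exists_nat_div_btwn {u v : ℝ} (hu : 0 ≤ u) (huv : u < v) :
    ∃ a b : ℕ, 0 < b ∧ u < a / b ∧ (a : ℝ) / b < v := by
  obtain ⟨n, hn⟩ := exists_nat_one_div_lt (sub_pos.2 huv)
  have hb : (0 : ℝ) < n + 1 := n.cast_add_one_pos
  refine ⟨⌊u * (n + 1)⌋₊ + 1, n + 1, n.succ_pos, ?_, ?_⟩
  · rw [lt_div_iff₀ (by exact_mod_cast hb)]
    exact_mod_cast Nat.lt_floor_add_one _
  · have hfloor := Nat.floor_le (mul_nonneg hu hb.le)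
    push_cast
    rw [add_div, one_div] at *
    calc (⌊u * (n + 1)⌋₊ : ℝ) / (n + 1) + (n + 1 : ℝ)⁻¹ ≤ u + (n + 1 : ℝ)⁻¹ := by
          gcongr
          rwa [div_le_iff₀ hb]
      _ < v := by linarith

lemma nat_div_mul_le_iff {a b m L : ℕ} (hb : 0 < b) : (a / b : ℝ) * L ≤ m ↔ a * L ≤ b * m := by
  rw [div_mul_eq_mul_div, div_le_iff₀ (by exact_mod_cast hb), mul_comm (m : ℝ)]
  norm_cast

lemma le_nat_div_mul_iff {a b m L : ℕ} (hb : 0 < b) : (m : ℝ) ≤ a / b * L ↔ b * m ≤ a * L := by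
  rw [div_mul_eq_mul_div, le_div_iff₀ (by exact_mod_cast hb), mul_comm (m : ℝ)]
  norm_cast

theorem MLRandom.eventually_count_lt {p : ℝ} {μ : Measure (ℕ → Bool)} {x : ℕ → Bool}
    (hx : MLRandom μ x) (hμ : IsBernoulliMeasure p μ) (hp : p ∈ Set.Ioo 0 1) {t : ℝ}
    (hpt : p < t) : ∀ᶠ L in atTop, ((prefixOf x L).count true : ℝ) < t * L := by
  obtain ⟨a, b, hb, hpq, hqt⟩ := exists_nat_div_btwn hp.1.le (lt_min hpt hp.2)
  set q : ℝ := a / b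
  have hq : q < t ∧ q < 1 := lt_min_iff.1 hqt
  by_contra h
  rw [not_eventually] at h
  -- for `s = (q - p) / 2` the Chernoff exponent `p * s + s ^ 2 - s * q` is `-s ^ 2 < 0`
  refine hμ.not_mlRandom_of_frequently (Set.Ioo_subset_Icc_self hp)
    (R := fun σ => decide (a * σ.length ≤ b * σ.count true))
    (PrimrecRel.comp Primrec.nat_le (Primrec.nat_mul.comp (Primrec.const a) Primrec.list_length)
      (Primrec.nat_mul.comp (Primrec.const b) primrec_count_true)).decide.to_comp
    (s := (q - p) / 2) (θ := (q - p) / 2 * q)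
    (abs_le.2 ⟨by linarith, by linarith [hp.1]⟩) (by nlinarith)
    (fun σ hσ => ?_) (h.mono fun L hL => ?_) hx
  · have := (nat_div_mul_le_iff hb).2 (of_decide_eq_true hσ)
    rw [mul_assoc]
    exact mul_le_mul_of_nonneg_left this (by linarith)
  · rw [not_lt] at hL
    refine decide_eq_true ?_
    rw [length_prefixOf, ← nat_div_mul_le_iff hb]
    exact (mul_le_mul_of_nonneg_right hq.1.le L.cast_nonneg).trans hL

theorem MLRandom.eventually_lt_count {p : ℝ} {μ : Measure (ℕ → Bool)} {x : ℕ → Bool}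
    (hx : MLRandom μ x) (hμ : IsBernoulliMeasure p μ) (hp : p ∈ Set.Ioo 0 1) {t : ℝ}
    (htp : t < p) : ∀ᶠ L in atTop, t * L < (prefixOf x L).count true := by
  obtain ⟨a, b, hb, htq, hqp⟩ := exists_nat_div_btwn (le_max_right t 0) (max_lt htp hp.1)
  set q : ℝ := a / b
  have hq : t < q ∧ 0 < q := max_lt_iff.1 htq
  by_contra h
  rw [not_eventually] at h
  refine hμ.not_mlRandom_of_frequently (Set.Ioo_subset_Icc_self hp)
    (R := fun σ => decide (b * σ.count true ≤ a * σ.length))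
    (PrimrecRel.comp Primrec.nat_le (Primrec.nat_mul.comp (Primrec.const b) primrec_count_true)
      (Primrec.nat_mul.comp (Primrec.const a) Primrec.list_length)).decide.to_comp
    (s := -((p - q) / 2)) (θ := -((p - q) / 2) * q)
    (abs_le.2 ⟨by linarith [hp.2], by linarith⟩) (by nlinarith)
    (fun σ hσ => ?_) (h.mono fun L hL => ?_) hx
  · have := (le_nat_div_mul_iff hb).2 (of_decide_eq_true hσ)
    rw [mul_assoc, neg_mul, neg_mul, neg_le_neg_iff]
    exact mul_le_mul_of_nonneg_left this (by linarith)
  · rw [not_lt] at hL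
    refine decide_eq_true ?_
    rw [length_prefixOf, ← le_nat_div_mul_iff hb]
    exact hL.trans (mul_le_mul_of_nonneg_right hq.1.le L.cast_nonneg)

lemma sum_range_ite_eq_count_prefixOf (x : ℕ → Bool) (n : ℕ) :
    ∑ i ∈ Finset.range n, (if x i then (1 : ℝ) else 0) = (prefixOf x n).count true := by
  rw [prefixOf, count_true_ofFn, ← Fin.sum_univ_eq_sum_range]
  push_cast
  rfl

theorem mlrandom_lln_general (p : ℝ) (hp : p ∈ Set.Ioo (0 : ℝ) 1)
    (μ : Measure (ℕ → Bool))
    (hcyl : ∀ σ : List Bool,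
      μ (cylSet σ) = ∏ i ∈ Finset.range σ.length,
        ENNReal.ofReal (if σ.getD i false then p else 1 - p))
    (x : ℕ → Bool) (hx : MLRandom μ x) :
    Tendsto (fun n : ℕ => (∑ i ∈ Finset.range n, if x i then (1 : ℝ) else 0) / n)
      atTop (nhds p) := by
  simp_rw [sum_range_ite_eq_count_prefixOf]
  refine tendsto_order.2 ⟨fun t htp => ?_, fun t hpt => ?_⟩
  · filter_upwards [hx.eventually_lt_count hcyl hp htp, eventually_gt_atTop 0] with L hL hL0
    rwa [lt_div_iff₀ (by positivity)]
  · filter_upwards [hx.eventually_count_lt hcyl hp hpt, eventually_gt_atTop 0] with L hL hL0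
    rwa [div_lt_iff₀ (by positivity)]

/-- every Martin-Löf random sequence with respect to the Bernoulli measure
`μ_p` with computable parameter `p ∈ (0,1)` satisfies the law of large numbers. -/
theorem mlrandom_lln (p : ℝ) (hp : p ∈ Set.Ioo (0 : ℝ) 1) (hpc : ComputableReal p)
    (μ : Measure (ℕ → Bool)) [IsProbabilityMeasure μ]
    (hcyl : ∀ σ : List Bool,
      μ (cylSet σ) = ∏ i ∈ Finset.range σ.length,
        ENNReal.ofReal (if σ.getD i false then p else 1 - p))
    (x : ℕ → Bool) (hx : MLRandom μ x) :
    Tendsto (fun n : ℕ => (∑ i ∈ Finset.range n, if x i then (1 : ℝ) else 0) / n)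
      atTop (nhds p) :=
  mlrandom_lln_general p hp μ hcyl x hx
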